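/- Taking α = 1 in the parameterized inequality recovers the Zhang et al. relation: for N ≥ 2 Hermitian observables A_i, a density matrix ρ, and x ∈ {0,1}: ∑_{i=1}^N Δ²_ρ(A_i) ≥ (1/(2N−2))·[ (2/(N(N−1)))·(∑_{1≤i<j≤N} Δ_ρ(A_i + (−1)^x A_j))² + ∑_{1≤i<j≤N} Δ²_ρ(A_i + (−1)^{x+1} A_j) ]. -/

import Mathlib

/-!
Put `ε = (-1)^x`, so `ε² = 1`. Variance obeys the parallelogram law
`Δ²(A + εB) + Δ²(A - εB) = 2Δ²(A) + 2Δ²(B)`; summed over the pairs `i < j` it gives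
`∑ Δ²(A_i + εA_j) + ∑ Δ²(A_i - εA_j) = 2(N - 1) ∑ Δ²(A_i)`.
Cauchy–Schwarz over the `N(N - 1)/2` pairs bounds `(∑ Δ(A_i + εA_j))²` by
`N(N - 1)/2 · ∑ Δ²(A_i + εA_j)`, which is legitimate because `Δ² = Tr ρ(M - ⟨M⟩)² ≥ 0`.
-/

open Finset ComplexOrder

/-- Variance of an observable `M` in the state `ρ`. -/
noncomputable def qvar {d : ℕ} (ρ M : Matrix (Fin d) (Fin d) ℂ) : ℝ :=
  ((ρ * M ^ 2).trace - (ρ * M).trace ^ 2).re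

/-- Standard deviation of an observable `M` in the state `ρ`. -/
noncomputable def qdev {d : ℕ} (ρ M : Matrix (Fin d) (Fin d) ℂ) : ℝ :=
  Real.sqrt (qvar ρ M)

namespace Matrix

variable {n R : Type*} [Fintype n]

lemma PosSemidef.trace_mul_conjTranspose_mul_self_nonneg [CommRing R] [PartialOrder R]
    [StarRing R] [StarOrderedRing R] {ρ : Matrix n n R} (hρ : ρ.PosSemidef) (B : Matrix n n R) :
    0 ≤ (ρ * (Bᴴ * B)).trace := by
  rw [← Matrix.mul_assoc, trace_mul_comm]
  simpa only [Matrix.mul_assoc] using (hρ.mul_mul_conjTranspose_same B).trace_nonneg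

lemma IsHermitian.star_trace_mul [CommSemiring R] [StarRing R] {A B : Matrix n n R}
    (hA : A.IsHermitian) (hB : B.IsHermitian) : star (A * B).trace = (A * B).trace := by
  rw [← trace_conjTranspose, conjTranspose_mul, hA.eq, hB.eq, trace_mul_comm]

lemma trace_mul_sub_trace_mul_smul_one_sq [DecidableEq n] [CommRing R] {ρ : Matrix n n R}
    (hρ : ρ.trace = 1) (M : Matrix n n R) :
    (ρ * (M - (ρ * M).trace • 1) ^ 2).trace = (ρ * M ^ 2).trace - (ρ * M).trace ^ 2 := by
  simp only [sq, Matrix.sub_mul, Matrix.mul_sub, Matrix.smul_mul, Matrix.mul_smul,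
    Matrix.mul_one, Matrix.one_mul, trace_sub, trace_smul, hρ, smul_eq_mul]
  ring

end Matrix

open Matrix in
lemma qvar_nonneg {d : ℕ} {ρ M : Matrix (Fin d) (Fin d) ℂ}
    (hρ : ρ.PosSemidef) (hρ1 : ρ.trace = 1) (hM : M.IsHermitian) : 0 ≤ qvar ρ M := by
  set c := (ρ * M).trace
  have hc : star c = c := hρ.1.star_trace_mul hM
  have hMc : (M - c • 1).IsHermitian := hM.sub <| by
    simp [IsHermitian, conjTranspose_smul, hc]
  have h := hρ.trace_mul_conjTranspose_mul_self_nonneg (M - c • 1)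
  rw [hMc.eq, ← sq, trace_mul_sub_trace_mul_smul_one_sq hρ1] at h
  exact (Complex.nonneg_iff.mp h).1

lemma qvar_add_smul_add_qvar_sub_smul {d : ℕ} (ρ A B : Matrix (Fin d) (Fin d) ℂ) {ε : ℂ}
    (hε : ε ^ 2 = 1) :
    qvar ρ (A + ε • B) + qvar ρ (A - ε • B) = 2 * qvar ρ A + 2 * qvar ρ B := by
  have key : ((ρ * (A + ε • B) ^ 2).trace - (ρ * (A + ε • B)).trace ^ 2)
      + ((ρ * (A - ε • B) ^ 2).trace - (ρ * (A - ε • B)).trace ^ 2)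
      = 2 * ((ρ * A ^ 2).trace - (ρ * A).trace ^ 2)
      + 2 * ε ^ 2 * ((ρ * B ^ 2).trace - (ρ * B).trace ^ 2) := by
    simp only [sq, Matrix.add_mul, Matrix.mul_add, Matrix.sub_mul, Matrix.mul_sub,
      Matrix.smul_mul, Matrix.mul_smul, Matrix.trace_add, Matrix.trace_sub, Matrix.trace_smul,
      smul_eq_mul]
    ring
  rw [hε, mul_one] at key
  simpa [qvar] using congrArg Complex.re key

lemma sq_sum_sum_sqrt_le {ι κ : Type*} (s : Finset ι) (t : ι → Finset κ) (f : ι → κ → ℝ)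
    (hf : ∀ i ∈ s, ∀ j ∈ t i, 0 ≤ f i j) :
    (∑ i ∈ s, ∑ j ∈ t i, √(f i j)) ^ 2
      ≤ (∑ i ∈ s, ((t i).card : ℝ)) * ∑ i ∈ s, ∑ j ∈ t i, f i j := by
  have hsq : ∑ i ∈ s, ∑ j ∈ t i, f i j = ∑ p ∈ s.sigma t, √(f p.1 p.2) ^ 2 := by
    rw [sum_sigma]
    exact sum_congr rfl fun i hi => sum_congr rfl fun j hj => (Real.sq_sqrt (hf i hi j hj)).symm
  rw [hsq, ← Nat.cast_sum, ← card_sigma, sum_sigma']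
  exact sq_sum_le_card_mul_sum_sq

section Pairs

variable {ι : Type*} [Fintype ι] [LinearOrder ι]

lemma sum_sum_filter_lt_add {R : Type*} [CommRing R] (v : ι → R) :
    ∑ i, ∑ j ∈ univ.filter (fun j => i < j), (v i + v j)
      = ((Fintype.card ι : R) - 1) * ∑ i, v i := by
  have hswap : ∑ i, ∑ j ∈ univ.filter (fun j => i < j), v j
      = ∑ i, ∑ j ∈ univ.filter (fun j => j < i), v i :=
    sum_comm' fun i j => by simp
  have hsplit : ∀ i, ∑ j ∈ univ.filter (fun j => i < j), v i
      + ∑ j ∈ univ.filter (fun j => j < i), v i = ((Fintype.card ι : R) - 1) * v i := by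
    intro i
    have hne : univ.filter (fun j => i < j) ∪ univ.filter (fun j => j < i) = univ.erase i := by
      ext j
      simp [ne_comm]
    rw [← sum_union (disjoint_filter.mpr fun j _ h h' => lt_asymm h h'), hne, sum_const,
      nsmul_eq_mul, card_erase_of_mem (mem_univ i), card_univ,
      Nat.cast_pred (Fintype.card_pos_iff.mpr ⟨i⟩)]
  simp only [sum_add_distrib]
  rw [hswap, ← sum_add_distrib, mul_sum]
  exact sum_congr rfl fun i _ => hsplit i

lemma sum_card_filter_lt :
    ∑ i : ι, ((univ.filter (fun j => i < j)).card : ℝ)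
      = (Fintype.card ι : ℝ) * ((Fintype.card ι : ℝ) - 1) / 2 := by
  have h := sum_sum_filter_lt_add (fun _ : ι => (1 : ℝ))
  simp only [sum_const, nsmul_eq_mul, card_univ, mul_one] at h
  rw [← sum_mul] at h
  linarith

lemma sum_sum_filter_lt_qvar_add_smul_add_qvar_sub_smul {d : ℕ}
    (ρ : Matrix (Fin d) (Fin d) ℂ) (A : ι → Matrix (Fin d) (Fin d) ℂ) {ε : ℂ} (hε : ε ^ 2 = 1) :
    ∑ i, ∑ j ∈ univ.filter (fun j => i < j), qvar ρ (A i + ε • A j)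
      + ∑ i, ∑ j ∈ univ.filter (fun j => i < j), qvar ρ (A i - ε • A j)
      = 2 * ((Fintype.card ι - 1) * ∑ i, qvar ρ (A i)) := by
  rw [← sum_sum_filter_lt_add, mul_sum, ← sum_add_distrib]
  refine sum_congr rfl fun i _ => ?_
  rw [mul_sum, ← sum_add_distrib]
  refine sum_congr rfl fun j _ => ?_
  rw [qvar_add_smul_add_qvar_sub_smul ρ _ _ hε]
  ring

end Pairs

theorem zhang_uncertainty_general {d N : ℕ} (hN : 2 ≤ N) (ρ : Matrix (Fin d) (Fin d) ℂ)
    (hρ : ρ.PosSemidef) (hρ1 : ρ.trace = 1)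
    (A : Fin N → Matrix (Fin d) (Fin d) ℂ) (hA : ∀ i, (A i).IsHermitian)
    (x : ℕ) :
    ∑ i, qvar ρ (A i) ≥
      (1 / (2 * (N : ℝ) - 2)) *
        ((2 / ((N : ℝ) * ((N : ℝ) - 1))) *
          (∑ i : Fin N, ∑ j ∈ univ.filter (fun j => i < j),
            qdev ρ (A i + ((-1 : ℂ) ^ x) • A j)) ^ 2 +
         ∑ i : Fin N, ∑ j ∈ univ.filter (fun j => i < j),
            qvar ρ (A i + ((-1 : ℂ) ^ (x + 1)) • A j)) := by
  simp only [pow_succ, mul_neg_one, neg_smul, ← sub_eq_add_neg]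
  set ε : ℂ := (-1) ^ x
  have hε : ε ^ 2 = 1 := by rw [← pow_mul, mul_comm, pow_mul]; norm_num
  have hεA : ∀ j, (ε • A j).IsHermitian := fun j => (hA j).smul <| by simp [IsSelfAdjoint, ε]
  have hparallelogram := sum_sum_filter_lt_qvar_add_smul_add_qvar_sub_smul ρ A hε
  rw [Fintype.card_fin] at hparallelogram
  have hcauchy := sq_sum_sum_sqrt_le univ (fun i : Fin N => univ.filter (fun j => i < j))
    (fun i j => qvar ρ (A i + ε • A j))
    (fun i _ j _ => qvar_nonneg hρ hρ1 ((hA i).add (hεA j)))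
  rw [sum_card_filter_lt, Fintype.card_fin] at hcauchy
  have hN' : (2 : ℝ) ≤ N := by exact_mod_cast hN
  have hpairs : 2 / ((N : ℝ) * (N - 1)) * (∑ i : Fin N, ∑ j ∈ univ.filter (fun j => i < j),
      qdev ρ (A i + ε • A j)) ^ 2 ≤
      ∑ i : Fin N, ∑ j ∈ univ.filter (fun j => i < j), qvar ρ (A i + ε • A j) := by
    rw [div_mul_eq_mul_div, div_le_iff₀ (by nlinarith)]
    unfold qdev
    linarith
  rw [ge_iff_le, one_div_mul_eq_div, div_le_iff₀ (by linarith)]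
  linarith

theorem zhang_uncertainty {d N : ℕ} (hN : 2 ≤ N) (ρ : Matrix (Fin d) (Fin d) ℂ)
    (hρ : ρ.PosSemidef) (hρ1 : ρ.trace = 1)
    (A : Fin N → Matrix (Fin d) (Fin d) ℂ) (hA : ∀ i, (A i).IsHermitian)
    (x : ℕ) (hx : x ∈ ({0, 1} : Finset ℕ)) :
    ∑ i, qvar ρ (A i) ≥
      (1 / (2 * (N : ℝ) - 2)) *
        ((2 / ((N : ℝ) * ((N : ℝ) - 1))) *
          (∑ i : Fin N, ∑ j ∈ univ.filter (fun j => i < j),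
            qdev ρ (A i + ((-1 : ℂ) ^ x) • A j)) ^ 2 +
         ∑ i : Fin N, ∑ j ∈ univ.filter (fun j => i < j),
            qvar ρ (A i + ((-1 : ℂ) ^ (x + 1)) • A j)) :=
  zhang_uncertainty_general hN ρ hρ hρ1 A hA x
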